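/- Cheeger's inequality (easy direction): for a finite $d$-regular graph $G$ with Laplacian $L_G$ (with $L_G(u,u)=1$, $L_G(u,v)=-1/d$ for edges), the second smallest eigenvalue $\lambda_G = \min_{x \perp \mathbf{1}} \frac{\langle x, L_G x\rangle}{\|x\|^2}$ satisfies $\lambda_G \le h_G$, where $h_G$ is the edge expansion of $G$. -/

import Mathlib

open Finset
open scoped Classical

/-- The set of edges of `G` crossing the cut `(X, V \ X)`. -/
noncomputable def cutEdges {V : Type*} [Fintype V] (G : SimpleGraph V)
    (X : Finset V) : Finset (Sym2 V) :=
  G.edgeFinset.filter (fun e => ∃ a b, e = s(a, b) ∧ a ∈ X ∧ b ∉ X)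

/-- The Laplacian of a `d`-regular graph applied to `x : V → ℝ`:
`(L x) v = x v - (1/d) ∑_{w ~ v} x w`. -/
noncomputable def lap {V : Type*} [Fintype V] (G : SimpleGraph V) (d : ℕ)
    (x : V → ℝ) (v : V) : ℝ :=
  x v - (1 / (d : ℝ)) * ∑ w ∈ G.neighborFinset v, x w

/-
Test the Rayleigh quotient with the indicator of an optimal cut `X`, shifted by `|X|/n` to be
orthogonal to `𝟙`. Since the shift does not change differences across edges,
`⟨x, L x⟩ = |δ(X)| / d`, while `‖x‖² = |X| |Xᶜ| / n`. With `n d = 2 |E|` and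
`n · min(|X|, |Xᶜ|) ≤ 2 |X| |Xᶜ|` this quotient is at most the expansion of `X`.
-/

open Matrix SimpleGraph

section

variable {V : Type*} [Fintype V]

noncomputable def shiftedIndicator (X : Finset V) (v : V) : ℝ :=
  (if v ∈ X then 1 else 0) - #X / Fintype.card V

section Laplacian

variable {G : SimpleGraph V} {d : ℕ}

lemma lap_eq_smul_lapMatrix_mulVec (hd : d ≠ 0) (hreg : G.IsRegularOfDegree d) (x : V → ℝ) :
    lap G d x = (d : ℝ)⁻¹ • (G.lapMatrix ℝ *ᵥ x) := by
  ext v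
  rw [lap, Pi.smul_apply, lapMatrix_mulVec_apply, hreg.degree_eq, smul_eq_mul]
  field_simp

lemma sum_mul_lap_eq (hd : d ≠ 0) (hreg : G.IsRegularOfDegree d) (x : V → ℝ) :
    ∑ v, x v * lap G d x v =
      (∑ i, ∑ j, if G.Adj i j then (x i - x j) ^ 2 else 0) / (2 * d) := by
  have := lapMatrix_toLinearMap₂' ℝ G x
  rw [toLinearMap₂'_apply'] at this
  rw [lap_eq_smul_lapMatrix_mulVec hd hreg, div_mul_eq_div_div, ← this]
  simp only [Pi.smul_apply, smul_eq_mul, dotProduct, Finset.sum_div]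
  exact Finset.sum_congr rfl fun v _ => by ring

end Laplacian

section Cut

variable (G : SimpleGraph V) (X : Finset V)

lemma card_cutEdges_eq_card_interedges : #(cutEdges G X) = #(G.interedges X Xᶜ) := by
  refine (Finset.card_bij (fun p _ => s(p.1, p.2)) ?_ ?_ ?_).symm
  · rintro ⟨a, b⟩ hab
    rw [mk_mem_interedges_iff, mem_compl] at hab
    simp only [cutEdges, mem_filter, mem_edgeFinset, mem_edgeSet]
    exact ⟨hab.2.2, a, b, rfl, hab.1, hab.2.1⟩
  · rintro ⟨a, b⟩ hab ⟨a', b'⟩ hab' heq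
    rw [mk_mem_interedges_iff, mem_compl] at hab hab'
    rcases Sym2.eq_iff.mp heq with ⟨rfl, rfl⟩ | ⟨rfl, rfl⟩
    · rfl
    · exact absurd hab.1 hab'.2.1
  · intro e he
    simp only [cutEdges, mem_filter, mem_edgeFinset] at he
    obtain ⟨hadj, a, b, rfl, ha, hb⟩ := he
    exact ⟨(a, b), (G.mk_mem_interedges_iff).mpr ⟨ha, mem_compl.mpr hb, hadj⟩, rfl⟩

lemma card_interedges_eq_sum (s t : Finset V) :
    (#(G.interedges s t) : ℝ) = ∑ i, ∑ j, if i ∈ s ∧ j ∈ t ∧ G.Adj i j then 1 else 0 := by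
  have : G.interedges s t = univ.filter fun p : V × V => p.1 ∈ s ∧ p.2 ∈ t ∧ G.Adj p.1 p.2 := by
    ext; simp [mem_interedges_iff]
  rw [this, card_filter, ← univ_product_univ, sum_product]
  push_cast
  rfl

lemma sum_adj_sq_sub_indicator :
    (∑ i, ∑ j, if G.Adj i j then
      ((if i ∈ X then 1 else 0) - (if j ∈ X then 1 else 0) : ℝ) ^ 2 else 0) =
      2 * #(cutEdges G X) := by
  have hsplit : ∀ i j, (if G.Adj i j then
      ((if i ∈ X then 1 else 0) - (if j ∈ X then 1 else 0) : ℝ) ^ 2 else 0) =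
      (if i ∈ X ∧ j ∈ Xᶜ ∧ G.Adj i j then 1 else 0) +
        (if i ∈ Xᶜ ∧ j ∈ X ∧ G.Adj i j then 1 else 0) := by
    intro i j
    by_cases hi : i ∈ X <;> by_cases hj : j ∈ X <;> by_cases hij : G.Adj i j <;> simp [hi, hj, hij]
  simp only [hsplit, sum_add_distrib, ← card_interedges_eq_sum]
  have := G.symm
  rw [interedges, interedges, Rel.card_interedges_comm (r := G.Adj) Xᶜ, ← interedges,
    card_cutEdges_eq_card_interedges]
  ring

end Cut

lemma sum_shiftedIndicator (X : Finset V) : ∑ v, shiftedIndicator X v = 0 := by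
  rcases isEmpty_or_nonempty V with hV | hV
  · simp
  simp only [shiftedIndicator, sum_sub_distrib, sum_boole, sum_const, card_univ, nsmul_eq_mul]
  field_simp
  simp

lemma sum_sq_shiftedIndicator (X : Finset V) :
    ∑ v, shiftedIndicator X v ^ 2 = #X * #Xᶜ / Fintype.card V := by
  rcases isEmpty_or_nonempty V with hV | hV
  · simp
  set c : ℝ := #X / Fintype.card V
  have hsq : ∀ v, shiftedIndicator X v ^ 2 = (1 - 2 * c) * (if v ∈ X then 1 else 0) + c ^ 2 := by
    intro v
    unfold shiftedIndicator
    split_ifs <;> ring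
  have hn : (#X : ℝ) + #Xᶜ = Fintype.card V := by exact_mod_cast card_add_card_compl X
  simp only [hsq, sum_add_distrib, ← mul_sum, sum_boole, sum_const, card_univ, nsmul_eq_mul]
  simp only [Finset.filter_mem_eq_inter, univ_inter, c, ← hn]
  have : (0 : ℝ) < #X + #Xᶜ := by rw [hn]; exact_mod_cast Fintype.card_pos
  field_simp
  ring

lemma shiftedIndicator_ne_zero {X : Finset V} (hX : X.Nonempty) (hXu : X ≠ univ) : shiftedIndicator X ≠ 0 := by
  intro h
  have hpos : (0 : ℝ) < #X * #Xᶜ / Fintype.card V := by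
    have hXc : Xᶜ.Nonempty := nonempty_iff_ne_empty.mpr ((compl_eq_empty_iff X).not.mpr hXu)
    have : Nonempty V := ⟨hX.choose⟩
    positivity
  simp [← sum_sq_shiftedIndicator, h] at hpos

lemma sum_mul_lap_shiftedIndicator {G : SimpleGraph V} {d : ℕ} (hd : d ≠ 0)
    (hreg : G.IsRegularOfDegree d) (X : Finset V) :
    ∑ v, shiftedIndicator X v * lap G d (shiftedIndicator X) v = #(cutEdges G X) / d := by
  have hsub : ∀ i j, shiftedIndicator X i - shiftedIndicator X j =
      (if i ∈ X then 1 else 0) - (if j ∈ X then 1 else 0) := fun i j =>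
    sub_sub_sub_cancel_right _ _ _
  rw [sum_mul_lap_eq hd hreg]
  simp only [hsub, sum_adj_sq_sub_indicator]
  have : (d : ℝ) ≠ 0 := by exact_mod_cast hd
  field_simp

lemma SimpleGraph.IsRegularOfDegree.card_mul_eq_two_mul_card_edgeFinset {G : SimpleGraph V}
    [DecidableRel G.Adj] {d : ℕ} (hreg : G.IsRegularOfDegree d) :
    Fintype.card V * d = 2 * #G.edgeFinset := by
  rw [← G.sum_degrees_eq_twice_card_edges, sum_congr rfl fun v _ => hreg.degree_eq v, sum_const,
    card_univ, smul_eq_mul]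

lemma add_mul_min_le_two_mul {k m : ℝ} (hk : 0 ≤ k) (hm : 0 ≤ m) :
    (k + m) * min k m ≤ 2 * (k * m) := by
  rcases le_total k m with h | h
  · rw [min_eq_left h]; nlinarith
  · rw [min_eq_right h]; nlinarith

/- For a cut with sides of sizes `k`, `m` and `C` crossing edges in a `d`-regular graph with
`n` vertices and `E` edges: the Rayleigh quotient of its shifted indicator is at most its expansion. -/
lemma div_div_le_div_div_min {C d E k m n : ℝ} (hC : 0 ≤ C) (hd : 0 < d) (hk : 0 < k)
    (hm : 0 < m) (hn : n = k + m) (hE : n * d = 2 * E) :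
    C / d / (k * m / n) ≤ C / E / (min k m / n) := by
  subst hn
  have hE : 0 < E := by nlinarith
  have hmin : 0 < min k m := lt_min hk hm
  have hcut : E * min k m ≤ d * (k * m) := by
    nlinarith [mul_le_mul_of_nonneg_left (add_mul_min_le_two_mul hk.le hm.le) hd.le]
  calc C / d / (k * m / (k + m)) = C * (k + m) / (d * (k * m)) := by field_simp
    _ ≤ C * (k + m) / (E * min k m) := by gcongr
    _ = C / E / (min k m / (k + m)) := by field_simp

end

theorem cheeger_easy_direction_general {V : Type*} [Fintype V] (G : SimpleGraph V)
    (d : ℕ) (hd : 1 ≤ d) (hreg : G.IsRegularOfDegree d)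
    (lam h : ℝ)
    -- `lam` is the minimum of the Rayleigh quotient over nonzero `x ⊥ 1`:
    (hlam_le : ∀ x : V → ℝ, x ≠ 0 → (∑ v, x v) = 0 →
      lam ≤ (∑ v, x v * lap G d x v) / (∑ v, (x v) ^ 2))
    -- `h` is the minimum of the cut ratio over nontrivial cuts:
    (hh_mem : ∃ X : Finset V, X.Nonempty ∧ X ≠ univ ∧
      h = (((cutEdges G X).card : ℝ) / (G.edgeFinset.card : ℝ)) /
            (min (X.card : ℝ) ((Xᶜ).card : ℝ) / (Fintype.card V : ℝ))) :
    lam ≤ h := by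
  obtain ⟨X, hX, hXu, rfl⟩ := hh_mem
  have hRayleigh := hlam_le _ (shiftedIndicator_ne_zero hX hXu) (sum_shiftedIndicator X)
  rw [sum_mul_lap_shiftedIndicator (by omega) hreg, sum_sq_shiftedIndicator] at hRayleigh
  refine hRayleigh.trans (div_div_le_div_div_min (by positivity) (by positivity)
    (by simpa using hX) ?_ ?_ ?_)
  · simpa [nonempty_iff_ne_empty] using hXu
  · exact_mod_cast (card_add_card_compl X).symm
  · exact_mod_cast hreg.card_mul_eq_two_mul_card_edgeFinset

/-- Cheeger's inequality, easy direction: `λ_G ≤ h_G` for a `d`-regular graph,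
where `λ_G = min_{x ⊥ 1, x ≠ 0} ⟨x, L_G x⟩ / ‖x‖²` and `h_G` is the edge
expansion `min_{∅ ≠ X ⊊ V} (|δ(X)|/|E|) / (min(|X|,|V∖X|)/|V|)`. -/
theorem cheeger_easy_direction {V : Type*} [Fintype V] (G : SimpleGraph V)
    (d : ℕ) (hd : 1 ≤ d) (hreg : G.IsRegularOfDegree d)
    (hV : 2 ≤ Fintype.card V) (hE : 0 < G.edgeFinset.card)
    (lam h : ℝ)
    -- `lam` is the minimum of the Rayleigh quotient over nonzero `x ⊥ 1`:
    (hlam_le : ∀ x : V → ℝ, x ≠ 0 → (∑ v, x v) = 0 →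
      lam ≤ (∑ v, x v * lap G d x v) / (∑ v, (x v) ^ 2))
    (hlam_mem : ∃ x : V → ℝ, x ≠ 0 ∧ (∑ v, x v) = 0 ∧
      lam = (∑ v, x v * lap G d x v) / (∑ v, (x v) ^ 2))
    -- `h` is the minimum of the cut ratio over nontrivial cuts:
    (hh_le : ∀ X : Finset V, X.Nonempty → X ≠ univ →
      h ≤ (((cutEdges G X).card : ℝ) / (G.edgeFinset.card : ℝ)) /
            (min (X.card : ℝ) ((Xᶜ).card : ℝ) / (Fintype.card V : ℝ)))
    (hh_mem : ∃ X : Finset V, X.Nonempty ∧ X ≠ univ ∧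
      h = (((cutEdges G X).card : ℝ) / (G.edgeFinset.card : ℝ)) /
            (min (X.card : ℝ) ((Xᶜ).card : ℝ) / (Fintype.card V : ℝ))) :
    lam ≤ h :=
  cheeger_easy_direction_general G d hd hreg lam h hlam_le hh_mem
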